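/- arXiv:1208.0687 — 2 statements merged into one kernel-verified Lean document; each statement's English description precedes it below -/
import Mathlib

section
/- Let L ∈ ℕ and let K ∈ L¹(ℝ) satisfy ∫K = 1, ∫ x^l K(x) dx = 0 for l = 1, …, L, and ∫ |x|^{L+1}|K(x)| dx < ∞. Then for every s ∈ [0, L+1] there is a constant C > 0 such that |𝓕K(u) − 1| ≤ C·|u|^s for all u ∈ ℝ; in particular sup_{u ≠ 0} |u|^{−s} |𝓕K(u) − 1| < ∞. -/
open MeasureTheory Complex Real Filter

noncomputable def Ft (f : ℝ → ℂ) (u : ℝ) : ℂ :=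
  ∫ x : ℝ, Complex.exp (Complex.I * u * x) * f x

noncomputable def FtInv (g : ℝ → ℂ) (x : ℝ) : ℂ :=
  (2 * Real.pi)⁻¹ • ∫ u : ℝ, Complex.exp (-(Complex.I * u * x)) * g u

/-- Squared Sobolev norm `‖f‖²_{H^s} = ∫ ⟨u⟩^{2s} |𝓕f(u)|² du`. -/
noncomputable def sobNormSq (s : ℝ) (f : ℝ → ℂ) : ℝ :=
  ∫ u : ℝ, (1 + u ^ 2) ^ s * ‖Ft f u‖ ^ 2

noncomputable def sobNorm (s : ℝ) (f : ℝ → ℂ) : ℝ :=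
  (sobNormSq s f) ^ (1/2 : ℝ)

/-- Membership in the Sobolev space `H^s(ℝ)`. -/
def MemSobolev (s : ℝ) (f : ℝ → ℂ) : Prop :=
  MemLp f 2 volume ∧ Integrable (fun u : ℝ => (1 + u ^ 2) ^ s * ‖Ft f u‖ ^ 2)

/-! Subtracting from `exp (I u x)` its Taylor polynomial of degree `L`, whose integral against `K`
is `1` by the moment conditions, leaves a remainder bounded by `|u x| ^ (L + 1)`, so
`‖𝓕K(u) - 1‖ ≤ (∫ |x| ^ (L + 1) |K x|) |u| ^ (L + 1)`. Together with the trivial bound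
`‖𝓕K(u) - 1‖ ≤ ‖K‖₁ + 1`, used for `|u| ≥ 1`, this gives `C |u| ^ s` for every `s ∈ [0, L + 1]`. -/

theorem hasDerivAt_cexp_sub_sum_range (n : ℕ) (z : ℂ) :
    HasDerivAt (fun w => cexp w - ∑ l ∈ Finset.range (n + 1), w ^ l / l.factorial)
      (cexp z - ∑ l ∈ Finset.range n, z ^ l / l.factorial) z := by
  have hterm : ∀ l ∈ Finset.range n, HasDerivAt (fun w : ℂ => w ^ (l + 1) / (l + 1).factorial)
      (z ^ l / l.factorial) z := by
    intro l _
    refine ((hasDerivAt_pow (l + 1) z).div_const ((l + 1).factorial : ℂ)).congr_deriv ?_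
    rw [Nat.factorial_succ, Nat.cast_mul, Nat.add_sub_cancel]
    field_simp
  have hsum := (HasDerivAt.fun_sum hterm).const_add 1
  simp_rw [Finset.sum_range_succ' (fun l => _ ^ l / _), pow_zero, Nat.factorial_zero,
    Nat.cast_one, div_one, add_comm _ (1 : ℂ)]
  exact (hasDerivAt_exp z).sub hsum

theorem norm_cexp_I_mul_sub_sum_range_le (n : ℕ) (θ : ℝ) :
    ‖cexp (I * θ) - ∑ l ∈ Finset.range n, (I * θ) ^ l / l.factorial‖ ≤ |θ| ^ n := by
  induction n generalizing θ with
  | zero => simp [norm_exp_I_mul_ofReal]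
  | succ n ih =>
    set R : ℕ → ℝ → ℂ := fun m t => cexp (I * t) - ∑ l ∈ Finset.range m, (I * t) ^ l / l.factorial
    have hderiv (t : ℝ) : HasDerivAt (R (n + 1)) (R n t * I) t := by
      have := (hasDerivAt_cexp_sub_sum_range n (I * t)).comp (t : ℂ)
        ((hasDerivAt_id (t : ℂ)).const_mul I)
      simpa using this.comp_ofReal
    have hbound : ∀ t ∈ Metric.closedBall (0 : ℝ) |θ|, ‖R n t * I‖ ≤ |θ| ^ n := by
      intro t ht
      rw [norm_mul, norm_I, mul_one]
      exact (ih t).trans (pow_le_pow_left₀ (abs_nonneg t) (by simpa using ht) n)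
    have hR0 : R (n + 1) 0 = 0 := by simp [R, Finset.sum_range_succ']
    have := (convex_closedBall (0 : ℝ) |θ|).norm_image_sub_le_of_norm_hasDerivWithin_le
      (fun t _ => (hderiv t).hasDerivWithinAt) hbound (Metric.mem_closedBall_self (abs_nonneg θ))
      (y := θ) (by simp)
    simpa [hR0, pow_succ] using this

theorem integrable_ofReal_pow_mul_of_le {μ : Measure ℝ} {f : ℝ → ℂ} {n l : ℕ}
    (hf : Integrable f μ) (hfn : Integrable (fun x => |x| ^ n * ‖f x‖) μ) (hl : l ≤ n) :
    Integrable (fun x : ℝ => (x : ℂ) ^ l * f x) μ := by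
  refine (hf.norm.add hfn).mono' ((by fun_prop : Continuous fun x : ℝ => (x : ℂ) ^ l)
    |>.aestronglyMeasurable.mul hf.aestronglyMeasurable) (ae_of_all _ fun x => ?_)
  have hpow : |x| ^ l ≤ 1 + |x| ^ n := by
    rcases le_total |x| 1 with h | h
    · linarith [pow_le_one₀ (n := l) (abs_nonneg x) h, pow_nonneg (abs_nonneg x) n]
    · linarith [pow_le_pow_right₀ h hl]
  calc ‖(x : ℂ) ^ l * f x‖ = |x| ^ l * ‖f x‖ := by simp
    _ ≤ (1 + |x| ^ n) * ‖f x‖ := by gcongr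
    _ = ‖f x‖ + |x| ^ n * ‖f x‖ := by ring

theorem integrable_cexp_I_mul_mul {f : ℝ → ℂ} (hf : Integrable f) (u : ℝ) :
    Integrable (fun x : ℝ => cexp (I * u * x) * f x) :=
  hf.bdd_mul (c := 1) (by fun_prop) (ae_of_all _ fun x => by simp [Complex.norm_exp])

theorem norm_Ft_le (f : ℝ → ℂ) (u : ℝ) : ‖Ft f u‖ ≤ ∫ x, ‖f x‖ :=
  (norm_integral_le_integral_norm _).trans_eq (by simp [Complex.norm_exp])

theorem Ft_sub_sum_moments_eq_integral {f : ℝ → ℂ} {n : ℕ} (hf : Integrable f)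
    (hmom : ∀ l < n, Integrable (fun x : ℝ => (x : ℂ) ^ l * f x)) (u : ℝ) :
    Ft f u - ∑ l ∈ Finset.range n, (I * u) ^ l / l.factorial * ∫ x : ℝ, (x : ℂ) ^ l * f x =
      ∫ x : ℝ, (cexp (I * u * x) - ∑ l ∈ Finset.range n, (I * u * x) ^ l / l.factorial) * f x := by
  have hterm : ∀ l ∈ Finset.range n,
      Integrable (fun x : ℝ => (I * u) ^ l / l.factorial * ((x : ℂ) ^ l * f x)) :=
    fun l hl => (hmom l (Finset.mem_range.1 hl)).const_mul _
  calc _ = ∫ x : ℝ, (cexp (I * u * x) * f x -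
        ∑ l ∈ Finset.range n, (I * u) ^ l / l.factorial * ((x : ℂ) ^ l * f x)) := by
        rw [integral_sub (integrable_cexp_I_mul_mul hf u) (integrable_finsetSum _ hterm),
          integral_finsetSum _ hterm]
        simp_rw [integral_const_mul]
        rfl
    _ = _ := by
        congr 1 with x
        rw [sub_mul, Finset.sum_mul]
        congr 1
        refine Finset.sum_congr rfl fun l _ => ?_
        ring

theorem norm_Ft_sub_sum_moments_le {f : ℝ → ℂ} {n : ℕ} (hf : Integrable f)
    (hfn : Integrable (fun x => |x| ^ n * ‖f x‖)) (u : ℝ) :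
    ‖Ft f u - ∑ l ∈ Finset.range n, (I * u) ^ l / l.factorial * ∫ x : ℝ, (x : ℂ) ^ l * f x‖ ≤
      (∫ x, |x| ^ n * ‖f x‖) * |u| ^ n := by
  rw [Ft_sub_sum_moments_eq_integral hf fun l hl => integrable_ofReal_pow_mul_of_le hf hfn hl.le]
  refine (norm_integral_le_of_norm_le (hfn.const_mul (|u| ^ n)) (ae_of_all _ fun x => ?_)).trans_eq
    (by rw [integral_const_mul, mul_comm])
  have hux : I * u * x = I * ((u * x : ℝ) : ℂ) := by push_cast; ring
  calc _ ≤ |u * x| ^ n * ‖f x‖ := by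
        rw [norm_mul, hux]
        gcongr
        exact norm_cexp_I_mul_sub_sum_range_le n (u * x)
    _ = |u| ^ n * (|x| ^ n * ‖f x‖) := by rw [abs_mul, mul_pow, mul_assoc]

theorem sum_range_mul_moment_eq_one {L : ℕ} {K : ℝ → ℝ} (hKint : ∫ x : ℝ, K x = 1)
    (hmom : ∀ l : ℕ, 1 ≤ l → l ≤ L → ∫ x : ℝ, x ^ l * K x = 0) (u : ℝ) :
    ∑ l ∈ Finset.range (L + 1), (I * u) ^ l / l.factorial * ∫ x : ℝ, (x : ℂ) ^ l * (K x : ℂ) =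
      1 := by
  have hmom_complex (l : ℕ) : ∫ x : ℝ, (x : ℂ) ^ l * (K x : ℂ) = ((∫ x : ℝ, x ^ l * K x : ℝ) : ℂ) := by
    rw [← integral_complex_ofReal]; push_cast; rfl
  rw [Finset.sum_range_succ', Finset.sum_eq_zero fun l hl => by
    rw [hmom_complex, hmom (l + 1) l.succ_pos (Finset.mem_range.1 hl), ofReal_zero, mul_zero]]
  simp [integral_complex_ofReal, hKint]

theorem le_mul_rpow_of_le_of_le_mul_pow {a A M t s : ℝ} {n : ℕ} (hA : a ≤ A) (hM : a ≤ M * t ^ n)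
    (hA0 : 0 ≤ A) (hM0 : 0 ≤ M) (ht : 0 ≤ t) (hs0 : 0 ≤ s) (hsn : s ≤ n) :
    a ≤ (A + M) * t ^ s := by
  have hts : 0 ≤ t ^ s := rpow_nonneg ht s
  rcases le_total t 1 with h | h
  · calc a ≤ M * t ^ (n : ℝ) := by rwa [rpow_natCast]
      _ ≤ M * t ^ s := mul_le_mul_of_nonneg_left (rpow_le_rpow_of_exponent_ge' ht h hs0 hsn) hM0
      _ ≤ (A + M) * t ^ s := mul_le_mul_of_nonneg_right (le_add_of_nonneg_left hA0) hts
  · calc a ≤ A * 1 := by rwa [mul_one]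
      _ ≤ A * t ^ s := mul_le_mul_of_nonneg_left (one_le_rpow h hs0) hA0
      _ ≤ (A + M) * t ^ s := mul_le_mul_of_nonneg_right (le_add_of_nonneg_right hM0) hts

/-- for a kernel of order `L` with finite `(L+1)`-st absolute moment,
`|𝓕K(u) − 1| ≤ C|u|^s` for every `s ∈ [0, L+1]`. -/
theorem kernel_fourier_taylor
    (L : ℕ) (K : ℝ → ℝ) (hK1 : Integrable K)
    (hKint : ∫ x : ℝ, K x = 1)
    (hmom : ∀ l : ℕ, 1 ≤ l → l ≤ L → ∫ x : ℝ, x ^ l * K x = 0)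
    (habs : Integrable (fun x : ℝ => |x| ^ (L + 1) * |K x|)) :
    ∀ s : ℝ, 0 ≤ s → s ≤ L + 1 →
      ∃ C > 0,
        (∀ u : ℝ, ‖Ft (fun x : ℝ => (K x : ℂ)) u - 1‖ ≤ C * |u| ^ s) ∧
        (∀ u : ℝ, u ≠ 0 → |u| ^ (-s) * ‖Ft (fun x : ℝ => (K x : ℂ)) u - 1‖ ≤ C) := by
  intro s hs0 hs1
  have hf : Integrable (fun x : ℝ => (K x : ℂ)) := hK1.ofReal
  have hfn : Integrable (fun x : ℝ => |x| ^ (L + 1) * ‖(K x : ℂ)‖) := by simpa using habs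
  set A := (∫ x, ‖(K x : ℂ)‖) + 1
  set M := ∫ x, |x| ^ (L + 1) * ‖(K x : ℂ)‖
  have hbound (u : ℝ) : ‖Ft (fun x : ℝ => (K x : ℂ)) u - 1‖ ≤ (A + M) * |u| ^ s := by
    refine le_mul_rpow_of_le_of_le_mul_pow ?_ ?_ (by positivity) (by positivity) (abs_nonneg u)
      hs0 (by exact_mod_cast hs1)
    · exact (norm_sub_le _ _).trans (by rw [norm_one]; exact add_le_add_left (norm_Ft_le _ u) 1)
    · simpa only [sum_range_mul_moment_eq_one hKint hmom u] using
        norm_Ft_sub_sum_moments_le hf hfn u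
  refine ⟨A + M, by positivity, hbound, fun u hu => ?_⟩
  rw [rpow_neg (abs_nonneg u), inv_mul_le_iff₀ (rpow_pos_of_pos (abs_pos.2 hu) s), mul_comm]
  exact hbound u
end

section
/- Let ψ : ℝ → ℂ be continuously differentiable with |ψ(u)| + |ψ′(u)| ≤ C·⟨u⟩^N for some N ∈ ℕ, and let w ∈ 𝒮(ℝ) be a Schwartz function. Define ζ^c(x) = (ix+1)·w(x). Then for every x ∈ ℝ: 𝓕⁻¹[ψ(u)·𝓕ζ^c(u)](x) = (1+ix)·𝓕⁻¹[ψ(u)·𝓕w(u)](x) − 𝓕⁻¹[ψ′(u)·𝓕w(u)](x). (Decomposition identity (18)/(19) for the deconvolution operator applied to the continuous part.) -/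
open MeasureTheory Complex Real Filter

/-! Multiplication by `i y` becomes differentiation under `Ft`, so `Ft ζᶜ = Ft w + (Ft w)'`.
With `g = ψ · Ft w` the product rule gives `ψ · (Ft w)' = g' - ψ' · Ft w`, and integration by
parts turns the inverse transform of a derivative into multiplication by `i x`:
`FtInv g' = i x · FtInv g`. Every integral converges because `Ft w` is again a Schwartz function
and `ψ`, `ψ'` grow at most polynomially. -/

open scoped FourierTransform SchwartzMap

lemma Ft_eq_fourier (f : ℝ → ℂ) (u : ℝ) : Ft f u = 𝓕 f (-(2 * π)⁻¹ * u) := by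
  rw [Ft, Real.fourier_real_eq_integral_exp_smul]
  congr 1 with y
  rw [smul_eq_mul]
  congr 2
  push_cast
  field_simp

lemma FtInv_eq_Ft (g : ℝ → ℂ) (x : ℝ) : FtInv g x = (2 * π)⁻¹ • Ft g (-x) := by
  rw [FtInv, Ft]
  congr 2 with u
  push_cast
  ring_nf

lemma integrable_exp_I_mul_mul {g : ℝ → ℂ} (hg : Integrable g) (t : ℝ) :
    Integrable fun u : ℝ => cexp (I * t * u) * g u :=
  hg.bdd_mul (c := 1) (by fun_prop) (Eventually.of_forall fun u => by
    rw [Complex.norm_exp]; simp)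

lemma Ft_add {f g : ℝ → ℂ} (hf : Integrable f) (hg : Integrable g) (u : ℝ) :
    Ft (fun y => f y + g y) u = Ft f u + Ft g u := by
  simp only [Ft, mul_add]
  exact integral_add (integrable_exp_I_mul_mul hf u) (integrable_exp_I_mul_mul hg u)

lemma FtInv_add {f g : ℝ → ℂ} (hf : Integrable f) (hg : Integrable g) (x : ℝ) :
    FtInv (fun u => f u + g u) x = FtInv f x + FtInv g x := by
  simp only [FtInv_eq_Ft, Ft_add hf hg, smul_add]

lemma Ft_deriv {g : ℝ → ℂ} (hg : Integrable g) (hg_diff : Differentiable ℝ g)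
    (hg' : Integrable (deriv g)) (t : ℝ) : Ft (deriv g) t = -(t * I) * Ft g t := by
  rw [Ft_eq_fourier, Ft_eq_fourier, Real.fourier_deriv hg hg_diff hg']
  simp only [smul_eq_mul]
  push_cast
  field_simp

lemma FtInv_deriv {g : ℝ → ℂ} (hg : Integrable g) (hg_diff : Differentiable ℝ g)
    (hg' : Integrable (deriv g)) (x : ℝ) : FtInv (deriv g) x = x * I * FtInv g x := by
  simp only [FtInv_eq_Ft, Ft_deriv hg hg_diff hg', Complex.real_smul]
  push_cast
  ring

lemma hasDerivAt_Ft {f : ℝ → ℂ} (hf : Integrable f) (hf' : Integrable fun y : ℝ => y • f y)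
    (u : ℝ) : HasDerivAt (Ft f) (Ft (fun y : ℝ => y * I * f y) u) u := by
  have hscale : HasDerivAt (fun u : ℝ => -(2 * π)⁻¹ * u) (-(2 * π)⁻¹) u := by
    simpa using (hasDerivAt_id u).const_mul (-(2 * π)⁻¹)
  have h := (Real.hasDerivAt_fourier hf hf' (-(2 * π)⁻¹ * u)).scomp u hscale
  rw [show Ft f = 𝓕 f ∘ (-(2 * π)⁻¹ * ·) from funext (Ft_eq_fourier f)]
  refine h.congr_deriv ?_
  rw [Ft_eq_fourier, Real.fourier_real_eq, Real.fourier_real_eq, ← integral_smul]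
  congr 1 with y
  rw [smul_comm, Complex.real_smul, smul_eq_mul]
  congr 1
  push_cast
  field_simp

lemma SchwartzMap.integrable_mul_of_norm_le {D : Type*} [NormedAddCommGroup D] [NormedSpace ℝ D]
    [MeasurableSpace D] [BorelSpace D] [SecondCountableTopology D] {μ : Measure D}
    [μ.HasTemperateGrowth] {φ : D → ℂ} (hφ : AEStronglyMeasurable φ μ) {C : ℝ} {N : ℕ}
    (hbound : ∀ x, ‖φ x‖ ≤ C * (1 + ‖x‖) ^ N) (g : 𝓢(D, ℂ)) :
    Integrable (fun x => φ x * g x) μ := by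
  have hC : 0 ≤ C := by simpa using (norm_nonneg _).trans (hbound 0)
  refine (((g.integrable_pow_mul μ 0).add (g.integrable_pow_mul μ N)).const_mul
    (C * 2 ^ (N - 1))).mono' (hφ.mul g.continuous.aestronglyMeasurable)
    (Eventually.of_forall fun x => ?_)
  calc ‖φ x * g x‖ ≤ C * (1 + ‖x‖) ^ N * ‖g x‖ := by
        rw [norm_mul]; gcongr; exact hbound x
    _ ≤ C * (2 ^ (N - 1) * (1 ^ N + ‖x‖ ^ N)) * ‖g x‖ := by
        gcongr; exact add_pow_le zero_le_one (norm_nonneg x) N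
    _ = _ := by simp only [Pi.add_apply]; ring

lemma exists_schwartzMap_coe_eq_Ft (w : 𝓢(ℝ, ℂ)) : ∃ g : 𝓢(ℝ, ℂ), ⇑g = Ft w := by
  have hc : -(2 * π)⁻¹ ≠ 0 := by simp [Real.pi_ne_zero]
  refine ⟨SchwartzMap.compCLMOfContinuousLinearEquiv ℂ
    (ContinuousLinearEquiv.unitsEquivAut ℝ (Units.mk0 _ hc)) (𝓕 w), ?_⟩
  ext u
  simp [Ft_eq_fourier, SchwartzMap.fourier_coe, mul_comm]

lemma integrable_mul_Ft {φ : ℝ → ℂ} (hφ : Continuous φ) {C : ℝ} {N : ℕ}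
    (hbound : ∀ u, ‖φ u‖ ≤ C * (1 + ‖u‖) ^ N) (w : 𝓢(ℝ, ℂ)) :
    Integrable fun u => φ u * Ft w u := by
  obtain ⟨g, hg⟩ := exists_schwartzMap_coe_eq_Ft w
  simpa [hg] using SchwartzMap.integrable_mul_of_norm_le hφ.aestronglyMeasurable hbound g

lemma SchwartzMap.exists_coe_eq_ofReal_mul_I_mul (w : 𝓢(ℝ, ℂ)) :
    ∃ v : 𝓢(ℝ, ℂ), ⇑v = fun y : ℝ => y * I * w y := by
  have h : Function.HasTemperateGrowth fun y : ℝ => (y : ℂ) * I := by fun_prop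
  refine ⟨SchwartzMap.smulLeftCLM ℂ (fun y : ℝ => (y : ℂ) * I) w, ?_⟩
  ext y
  simp [h]

lemma FtInv_mul_Ft_ofReal_mul_I_mul {ψ : ℝ → ℂ} {C : ℝ} {N : ℕ} (hψ : ContDiff ℝ 1 ψ)
    (hψ_bound : ∀ u, ‖ψ u‖ ≤ C * (1 + ‖u‖) ^ N)
    (hψ'_bound : ∀ u, ‖deriv ψ u‖ ≤ C * (1 + ‖u‖) ^ N) (w : 𝓢(ℝ, ℂ)) (x : ℝ) :
    FtInv (fun u => ψ u * Ft (fun y : ℝ => y * I * w y) u) x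
      = x * I * FtInv (fun u => ψ u * Ft w u) x - FtInv (fun u => deriv ψ u * Ft w u) x := by
  obtain ⟨v, hv⟩ := SchwartzMap.exists_coe_eq_ofReal_mul_I_mul w
  have hw' : Integrable fun y : ℝ => y • w y := (integrable_norm_iff (by fun_prop)).mp <| by
    simpa [norm_smul] using w.integrable_pow_mul volume 1
  have hFt_deriv (u : ℝ) : HasDerivAt (Ft w) (Ft v u) u := hv ▸ hasDerivAt_Ft w.integrable hw' u
  have hψ_diff : Differentiable ℝ ψ := hψ.differentiable one_ne_zero
  have hderiv : deriv (fun u => ψ u * Ft w u) = fun u => deriv ψ u * Ft w u + ψ u * Ft v u :=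
    funext fun u => ((hψ_diff u).hasDerivAt.mul (hFt_deriv u)).deriv
  have hdiff : Differentiable ℝ (fun u => ψ u * Ft w u) := fun u =>
    (hψ_diff u).mul (hFt_deriv u).differentiableAt
  have hψ_int := integrable_mul_Ft hψ.continuous hψ_bound w
  have hψ'_int := integrable_mul_Ft (hψ.continuous_deriv le_rfl) hψ'_bound w
  have hψv_int := integrable_mul_Ft hψ.continuous hψ_bound v
  have hderiv_int : Integrable (deriv fun u => ψ u * Ft w u) := hderiv ▸ hψ'_int.add hψv_int
  have key := FtInv_deriv hψ_int hdiff hderiv_int x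
  rw [hderiv, FtInv_add hψ'_int hψv_int, hv] at key
  linear_combination key

lemma one_add_sq_rpow_le (u : ℝ) (N : ℕ) : (1 + u ^ 2) ^ ((N : ℝ) / 2) ≤ (1 + ‖u‖) ^ N := by
  rw [Real.norm_eq_abs, div_eq_inv_mul, Real.rpow_mul_natCast (by positivity), ← one_div,
    ← Real.sqrt_eq_rpow]
  gcongr
  rw [Real.sqrt_le_left (by positivity)]
  nlinarith [sq_abs u, abs_nonneg u]

/-- decomposition identity (18)/(19): for a C¹ multiplier `ψ` of
polynomial growth, a Schwartz function `w` and `ζ^c(x) = (ix+1)w(x)`,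
`𝓕⁻¹[ψ 𝓕ζ^c] = (1+ix) 𝓕⁻¹[ψ 𝓕w] − 𝓕⁻¹[ψ' 𝓕w]` pointwise. -/
theorem deconv_decomposition_identity
    (C : ℝ) (hC : 0 < C) (N : ℕ)
    (ψ : ℝ → ℂ) (hψ : ContDiff ℝ 1 ψ)
    (hbound : ∀ u : ℝ, ‖ψ u‖ + ‖deriv ψ u‖ ≤ C * (1 + u ^ 2) ^ ((N : ℝ) / 2))
    (w : SchwartzMap ℝ ℂ) :
    ∀ x : ℝ,
      FtInv (fun u : ℝ => ψ u * Ft (fun y : ℝ => (y * Complex.I + 1) * w y) u) x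
        = (1 + x * Complex.I) * FtInv (fun u : ℝ => ψ u * Ft (fun y : ℝ => w y) u) x
          - FtInv (fun u : ℝ => deriv ψ u * Ft (fun y : ℝ => w y) u) x := by
  intro x
  have hweight (u : ℝ) : C * (1 + u ^ 2) ^ ((N : ℝ) / 2) ≤ C * (1 + ‖u‖) ^ N := by
    gcongr
    exact one_add_sq_rpow_le u N
  have hψ_bound (u : ℝ) : ‖ψ u‖ ≤ C * (1 + ‖u‖) ^ N := by
    linarith [hbound u, hweight u, norm_nonneg (deriv ψ u)]
  have hψ'_bound (u : ℝ) : ‖deriv ψ u‖ ≤ C * (1 + ‖u‖) ^ N := by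
    linarith [hbound u, hweight u, norm_nonneg (ψ u)]
  obtain ⟨v, hv⟩ := SchwartzMap.exists_coe_eq_ofReal_mul_I_mul w
  have hsplit : (fun u => ψ u * Ft (fun y : ℝ => (y * I + 1) * w y) u)
      = fun u => ψ u * Ft w u + ψ u * Ft v u := by
    ext u
    rw [← mul_add, ← Ft_add w.integrable v.integrable, hv]
    congr 2 with y
    ring
  rw [hsplit, FtInv_add (integrable_mul_Ft hψ.continuous hψ_bound w)
    (integrable_mul_Ft hψ.continuous hψ_bound v), hv,
    FtInv_mul_Ft_ofReal_mul_I_mul hψ hψ_bound hψ'_bound]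
  ring
end
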